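/- arXiv:1512.07560 — 6 statements merged into one kernel-verified Lean document; each statement's English description precedes it below -/
import Mathlib

section
/- Let (X, d) be a metric space, let x_1, …, x_n be points of X (n ≥ 2), let y_1, …, y_n be real numbers, let ρ > 0, and fix i ∈ {1, …, n}. Assume there exists j with x_j ≠ x_i, and assume the cross-validation sub-models interpolate the retained data at x_i, i.e. ŝ_{n,−j}(x_i) = y_i for every j ≠ i. Then the UP expected value interpolates the data: m̂_n(x_i) = y_i. -/
open scoped BigOperators

/-- The UP (Universal Prediction) weight of the `i`-th cross-validation sub-model,
built from design points `x : Fin n → X` with smoothing parameter `ρ`, evaluated at `p`. -/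
noncomputable def upWeight {X : Type*} [MetricSpace X] {n : ℕ} (x : Fin n → X) (ρ : ℝ)
    (i : Fin n) (p : X) : ℝ :=
  (1 - Real.exp (-(dist p (x i) ^ 2) / ρ ^ 2)) /
    ∑ j : Fin n, (1 - Real.exp (-(dist p (x j) ^ 2) / ρ ^ 2))

/-- The UP expected value `m̂_n(p) = ∑ i w_{i,n}(p) · ŝ_{n,−i}(p)`. -/
noncomputable def upMean {X : Type*} [MetricSpace X] {n : ℕ} (x : Fin n → X) (ρ : ℝ)
    (subm : Fin n → X → ℝ) (p : X) : ℝ :=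
  ∑ i : Fin n, upWeight x ρ i p * subm i p

/-- if the cross-validation sub-models interpolate the retained data at `x i`
(i.e. `ŝ_{n,−j}(x_i) = y_i` for every `j ≠ i`) and some design point differs from `x i`,
then the UP expected value interpolates the data: `m̂_n(x_i) = y_i`. -/
theorem upMean_interpolates {X : Type*} [MetricSpace X] {n : ℕ} (hn : 2 ≤ n)
    (x : Fin n → X) (y : Fin n → ℝ) (ρ : ℝ) (hρ : 0 < ρ) (i : Fin n)
    (h : ∃ j : Fin n, x j ≠ x i)
    (subm : Fin n → X → ℝ)
    (hinterp : ∀ j : Fin n, j ≠ i → subm j (x i) = y i) :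
    upMean x ρ subm (x i) = y i := by
  obtain ⟨j0, hj0⟩ := h
  have hterm : ∀ j : Fin n, 0 ≤ 1 - Real.exp (-(dist (x i) (x j) ^ 2) / ρ ^ 2) := by
    intro j
    have hle : -(dist (x i) (x j) ^ 2) / ρ ^ 2 ≤ 0 := by
      apply div_nonpos_of_nonpos_of_nonneg
      · simp [sq_nonneg]
      · positivity
    have := Real.exp_le_one_iff.mpr hle
    linarith
  have hSpos : 0 < ∑ j : Fin n, (1 - Real.exp (-(dist (x i) (x j) ^ 2) / ρ ^ 2)) := by
    apply Finset.sum_pos' (fun j _ => hterm j)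
    refine ⟨j0, Finset.mem_univ _, ?_⟩
    have hd : 0 < dist (x i) (x j0) := dist_pos.mpr (Ne.symm hj0)
    have hlt : -(dist (x i) (x j0) ^ 2) / ρ ^ 2 < 0 := by
      apply div_neg_of_neg_of_pos
      · nlinarith
      · positivity
    have := Real.exp_lt_one_iff.mpr hlt
    linarith
  have hwi : upWeight x ρ i (x i) = 0 := by
    simp [upWeight]
  have hsum : ∑ j : Fin n, upWeight x ρ j (x i) = 1 := by
    unfold upWeight
    rw [← Finset.sum_div, div_self hSpos.ne']
  calc upMean x ρ subm (x i)
      = ∑ j : Fin n, upWeight x ρ j (x i) * subm j (x i) := rfl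
    _ = ∑ j : Fin n, upWeight x ρ j (x i) * y i := by
        refine Finset.sum_congr rfl fun j _ => ?_
        by_cases hji : j = i
        · subst hji; simp [hwi]
        · rw [hinterp j hji]
    _ = (∑ j : Fin n, upWeight x ρ j (x i)) * y i := by rw [Finset.sum_mul]
    _ = y i := by rw [hsum, one_mul]
end

section
/- Let (X, d) be a metric space, let x_1, …, x_n be points of X (n ≥ 2), let y_1, …, y_n be real numbers, let ρ > 0, and fix i ∈ {1, …, n}. Assume there exists j with x_j ≠ x_i, and assume the cross-validation sub-models interpolate the retained data at x_i, i.e. ŝ_{n,−j}(x_i) = y_i for every j ≠ i. Then the UP local variance vanishes at the design point: σ̂²_n(x_i) = 0. -/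
open scoped BigOperators

/-- The UP local variance `σ̂²_n(p) = ∑ i w_{i,n}(p) · (ŝ_{n,−i}(p) − m̂_n(p))²`. -/
noncomputable def upVar {X : Type*} [MetricSpace X] {n : ℕ} (x : Fin n → X) (ρ : ℝ)
    (subm : Fin n → X → ℝ) (p : X) : ℝ :=
  ∑ i : Fin n, upWeight x ρ i p * (subm i p - upMean x ρ subm p) ^ 2

/-- if the cross-validation sub-models interpolate the retained data at `x i`
(i.e. `ŝ_{n,−j}(x_i) = y_i` for every `j ≠ i`) and some design point differs from `x i`,
then the UP local variance vanishes at the design point: `σ̂²_n(x_i) = 0`. -/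
theorem upVar_eq_zero_at_design_point {X : Type*} [MetricSpace X] {n : ℕ} (hn : 2 ≤ n)
    (x : Fin n → X) (y : Fin n → ℝ) (ρ : ℝ) (hρ : 0 < ρ) (i : Fin n)
    (h : ∃ j : Fin n, x j ≠ x i)
    (subm : Fin n → X → ℝ)
    (hinterp : ∀ j : Fin n, j ≠ i → subm j (x i) = y i) :
    upVar x ρ subm (x i) = 0 := by

  obtain ⟨k, hk⟩ := h
  set p := x i with hp
  set S := ∑ j : Fin n, (1 - Real.exp (-(dist p (x j) ^ 2) / ρ ^ 2)) with hS
  have hterm : ∀ j : Fin n, 0 ≤ 1 - Real.exp (-(dist p (x j) ^ 2) / ρ ^ 2) := by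
    intro j
    have : Real.exp (-(dist p (x j) ^ 2) / ρ ^ 2) ≤ 1 := by
      apply Real.exp_le_one_iff.mpr
      apply div_nonpos_of_nonpos_of_nonneg
      · simp [sq_nonneg]
      · positivity
    linarith
  have hkpos : 0 < 1 - Real.exp (-(dist p (x k) ^ 2) / ρ ^ 2) := by
    have hd : 0 < dist p (x k) := dist_pos.mpr (Ne.symm hk)
    have : Real.exp (-(dist p (x k) ^ 2) / ρ ^ 2) < 1 := by
      apply Real.exp_lt_one_iff.mpr
      apply div_neg_of_neg_of_pos
      · simp [pow_pos hd]
      · positivity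
    linarith
  have hSpos : 0 < S := by
    apply Finset.sum_pos' (fun j _ => hterm j) ⟨k, Finset.mem_univ k, hkpos⟩
  have hwi : upWeight x ρ i p = 0 := by
    simp [upWeight, ← hS, dist_self]
    left; simp [hp]
  have hwsum : ∑ j : Fin n, upWeight x ρ j p = 1 := by
    rw [show (∑ j : Fin n, upWeight x ρ j p) = (∑ j : Fin n, (1 - Real.exp (-(dist p (x j) ^ 2) / ρ ^ 2))) / S from ?_, ← hS, div_self hSpos.ne']
    rw [Finset.sum_div]
    rfl
  have hmean : upMean x ρ subm p = y i := by
    unfold upMean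
    have : ∀ j : Fin n, upWeight x ρ j p * subm j p = upWeight x ρ j p * y i := by
      intro j
      by_cases hji : j = i
      · subst hji; rw [hwi]; ring
      · rw [hinterp j hji]
    rw [Finset.sum_congr rfl (fun j _ => this j), ← Finset.sum_mul, hwsum, one_mul]
  unfold upVar
  apply Finset.sum_eq_zero
  intro j _
  by_cases hji : j = i
  · subst hji; rw [hwi]; ring
  · rw [hmean, hinterp j hji]; ring
end

section
/- Let (X, d) be a metric space, let x_1, …, x_n be points of X, and let ρ > 0. If there exist two indices k_1, k_2 ∈ {1, …, n} with x_{k_1} ≠ x_{k_2}, then for every x ∈ X the normalization sum of the UP weights satisfies Σ_{k=1}^n (1 − exp(−d(x, x_k)²/ρ²)) ≥ 1 − exp(−d(x_{k_1}, x_{k_2})²/(4ρ²)) > 0. -/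
open scoped BigOperators

/-- if two of the design points are distinct, then for every `p` the
normalization sum of the UP weights is bounded below by the positive constant
`1 − exp(−d(x_{k₁}, x_{k₂})²/(4ρ²))`. -/
theorem upWeight_denominator_lower_bound {X : Type*} [MetricSpace X] {n : ℕ}
    (x : Fin n → X) (ρ : ℝ) (hρ : 0 < ρ) (k₁ k₂ : Fin n) (hne : x k₁ ≠ x k₂) (p : X) :
    1 - Real.exp (-(dist (x k₁) (x k₂) ^ 2) / (4 * ρ ^ 2)) ≤
        ∑ k : Fin n, (1 - Real.exp (-(dist p (x k) ^ 2) / ρ ^ 2)) ∧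
      0 < 1 - Real.exp (-(dist (x k₁) (x k₂) ^ 2) / (4 * ρ ^ 2)) := by
  set D := dist (x k₁) (x k₂) with hD
  have hDpos : 0 < D := dist_pos.mpr hne
  have hρ2 : 0 < ρ ^ 2 := by positivity
  -- find an index with dist p (x k) ≥ D/2
  have hkey : ∃ k, D / 2 ≤ dist p (x k) := by
    by_contra h
    push_neg at h
    have h1 := h k₁
    have h2 := h k₂
    have := dist_triangle (x k₁) p (x k₂)
    rw [dist_comm (x k₁) p] at this
    linarith
  obtain ⟨k, hk⟩ := hkey
  have hterm : 1 - Real.exp (-(D ^ 2) / (4 * ρ ^ 2)) ≤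
      1 - Real.exp (-(dist p (x k) ^ 2) / ρ ^ 2) := by
    have hsq : D ^ 2 / 4 ≤ dist p (x k) ^ 2 := by
      have := mul_self_le_mul_self (by positivity : (0:ℝ) ≤ D / 2) hk
      nlinarith
    have : -(dist p (x k) ^ 2) / ρ ^ 2 ≤ -(D ^ 2) / (4 * ρ ^ 2) := by
      rw [div_le_div_iff₀ hρ2 (by positivity)]
      nlinarith
    linarith [Real.exp_le_exp.mpr this]
  have hnonneg : ∀ j ∈ Finset.univ, (0:ℝ) ≤ 1 - Real.exp (-(dist p (x j) ^ 2) / ρ ^ 2) := by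
    intro j _
    have : Real.exp (-(dist p (x j) ^ 2) / ρ ^ 2) ≤ 1 := by
      rw [← Real.exp_zero]
      exact Real.exp_le_exp.mpr (div_nonpos_of_nonpos_of_nonneg (neg_nonpos.mpr (by positivity)) (by positivity))
    linarith
  have hsum := Finset.single_le_sum hnonneg (Finset.mem_univ k)
  refine ⟨le_trans hterm hsum, ?_⟩
  have : Real.exp (-(D ^ 2) / (4 * ρ ^ 2)) < 1 := by
    rw [← Real.exp_zero]
    exact Real.exp_lt_exp.mpr (div_neg_of_neg_of_pos (neg_lt_zero.mpr (by positivity)) (by positivity))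
  linarith
end

section
/- Let (X, d) be a metric space, let ρ > 0, let n₀ ≥ 2, and let (x_k)_{k ≥ 1} be a sequence of points of X such that there exist indices k_1, k_2 ∈ {1, …, n₀} with x_{k_1} ≠ x_{k_2}. Then there exists θ > 0 (one may take θ = 1 / (ρ² (1 − exp(−d(x_{k_1}, x_{k_2})²/(4ρ²))))) such that for every n ≥ n₀, every x ∈ X, and every i ∈ {1, …, n}, the UP weight satisfies w_{i,n}(x) ≤ θ · d(x, x_i)². -/
open scoped BigOperators

/-- The UP weight for a sequence of design points `x : ℕ → X` (indexed from 1): at step `n`,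
the weight of the `i`-th cross-validation sub-model, built from the points `x 1, …, x n`
with smoothing parameter `ρ`, evaluated at `p`. -/
noncomputable def upWeightSeq {X : Type*} [MetricSpace X] (x : ℕ → X) (ρ : ℝ)
    (n i : ℕ) (p : X) : ℝ :=
  (1 - Real.exp (-(dist p (x i) ^ 2) / ρ ^ 2)) /
    ∑ j ∈ Finset.Icc 1 n, (1 - Real.exp (-(dist p (x j) ^ 2) / ρ ^ 2))

/-- Lemma 1 of the paper: if two of the first `n₀` points of the sequence are
distinct, then there is `θ > 0` such that for every `n ≥ n₀`, every `p ∈ X` and every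
`i ∈ {1,…,n}`, the UP weight satisfies `w_{i,n}(p) ≤ θ · d(p, x_i)²`. -/
theorem upWeightSeq_le_theta_mul_sq_dist {X : Type*} [MetricSpace X]
    (ρ : ℝ) (hρ : 0 < ρ) (n₀ : ℕ) (hn₀ : 2 ≤ n₀) (x : ℕ → X)
    (h : ∃ k₁ ∈ Finset.Icc 1 n₀, ∃ k₂ ∈ Finset.Icc 1 n₀, x k₁ ≠ x k₂) :
    ∃ θ > (0 : ℝ), ∀ n, n₀ ≤ n → ∀ p : X, ∀ i ∈ Finset.Icc 1 n,
      upWeightSeq x ρ n i p ≤ θ * dist p (x i) ^ 2 := by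
  obtain ⟨k₁, hk₁, k₂, hk₂, hne⟩ := h
  set D : ℝ := dist (x k₁) (x k₂) with hD
  have hDpos : 0 < D := dist_pos.mpr hne
  have hρ2 : (0 : ℝ) < ρ ^ 2 := by positivity
  set c : ℝ := 1 - Real.exp (-(D ^ 2 / 4) / ρ ^ 2) with hc
  have hcpos : 0 < c := by
    have : Real.exp (-(D ^ 2 / 4) / ρ ^ 2) < 1 := by
      rw [Real.exp_lt_one_iff, neg_div]
      have : 0 < D ^ 2 / 4 := by positivity
      have := div_pos this hρ2
      linarith
    rw [hc]; linarith
  refine ⟨1 / (ρ ^ 2 * c), by positivity, ?_⟩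
  intro n hn p i hi
  -- nonnegativity of each term
  have hterm : ∀ j : ℕ, 0 ≤ 1 - Real.exp (-(dist p (x j) ^ 2) / ρ ^ 2) := by
    intro j
    have : Real.exp (-(dist p (x j) ^ 2) / ρ ^ 2) ≤ 1 := by
      rw [Real.exp_le_one_iff]
      have : (0 : ℝ) ≤ dist p (x j) ^ 2 := by positivity
      have := div_nonneg this hρ2.le
      rw [neg_div]
      linarith
    linarith
  -- one of k₁, k₂ is far from p
  have hfar : ∃ k ∈ Finset.Icc 1 n, D / 2 ≤ dist p (x k) := by
    rcases le_total (dist p (x k₁)) (dist p (x k₂)) with hle | hle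
    · refine ⟨k₂, ?_, ?_⟩
      · simp only [Finset.mem_Icc] at hk₂ ⊢; exact ⟨hk₂.1, hk₂.2.trans hn⟩
      · have := dist_triangle (x k₁) p (x k₂)
        rw [dist_comm (x k₁) p] at this
        linarith
    · refine ⟨k₁, ?_, ?_⟩
      · simp only [Finset.mem_Icc] at hk₁ ⊢; exact ⟨hk₁.1, hk₁.2.trans hn⟩
      · have := dist_triangle (x k₁) p (x k₂)
        rw [dist_comm (x k₁) p] at this
        linarith
  obtain ⟨k, hk, hdk⟩ := hfar
  -- the sum is at least c
  have hsum : c ≤ ∑ j ∈ Finset.Icc 1 n, (1 - Real.exp (-(dist p (x j) ^ 2) / ρ ^ 2)) := by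
    have h1 : c ≤ 1 - Real.exp (-(dist p (x k) ^ 2) / ρ ^ 2) := by
      have hsq : D ^ 2 / 4 ≤ dist p (x k) ^ 2 := by
        have h2 : (D / 2) ^ 2 ≤ dist p (x k) ^ 2 := by
          apply sq_le_sq' <;> nlinarith [dist_nonneg (x := p) (y := x k)]
        nlinarith
      have : Real.exp (-(dist p (x k) ^ 2) / ρ ^ 2) ≤ Real.exp (-(D ^ 2 / 4) / ρ ^ 2) := by
        apply Real.exp_le_exp.mpr
        rw [neg_div, neg_div, neg_le_neg_iff]
        gcongr
      linarith
    calc c ≤ 1 - Real.exp (-(dist p (x k) ^ 2) / ρ ^ 2) := h1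
      _ ≤ _ := Finset.single_le_sum (fun j _ => hterm j) hk
  -- numerator bound: 1 - exp(-t) ≤ t
  have hnum : 1 - Real.exp (-(dist p (x i) ^ 2) / ρ ^ 2) ≤ dist p (x i) ^ 2 / ρ ^ 2 := by
    have := Real.add_one_le_exp (-(dist p (x i) ^ 2) / ρ ^ 2)
    have h2 : (0:ℝ) ≤ dist p (x i) ^ 2 / ρ ^ 2 := by positivity
    rw [neg_div] at this ⊢
    linarith
  have hfinal : upWeightSeq x ρ n i p ≤ (dist p (x i) ^ 2 / ρ ^ 2) / c := by
    unfold upWeightSeq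
    exact div_le_div₀ (by positivity) hnum hcpos hsum
  calc upWeightSeq x ρ n i p ≤ (dist p (x i) ^ 2 / ρ ^ 2) / c := hfinal
    _ = 1 / (ρ ^ 2 * c) * dist p (x i) ^ 2 := by field_simp
end

section
/- Let (X, d) be a metric space, let x_1, …, x_n be points of X (n ≥ 2) with at least two of them distinct, let ρ > 0 and δ > 0, let s : X → ℝ, and set y_j = s(x_j) for j = 1, …, n. Assume the cross-validation sub-models interpolate the retained data, i.e. ŝ_{n,−j}(x_i) = y_i for all i, j ∈ {1, …, n} with j ≠ i. Then the Universal Prediction Expected Improvement vanishes at every design point: κ_n(x_i) = 0 for i = 1, …, n. -/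
open scoped BigOperators

/-- The Universal Prediction Expected Improvement
`κ_n(p) = ∑ i w_{i,n}(p)·max(y*_n − ŝ_{n,−i}(p), 0) + δ·inf{d(p,x_j) : 1 ≤ j ≤ n}`,
where `y*_n = min_j s(x_j)` is the current best value. -/
noncomputable def upEI {X : Type*} [MetricSpace X] {n : ℕ} (x : Fin n → X)
    (s : X → ℝ) (subm : Fin n → X → ℝ) (ρ δ : ℝ) (p : X) : ℝ :=
  (∑ i : Fin n, upWeight x ρ i p * max ((⨅ j : Fin n, s (x j)) - subm i p) 0) +
    δ * ⨅ j : Fin n, dist p (x j)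

/-- Proposition 1 of the paper: for an interpolating family of
cross-validation sub-models, the Universal Prediction Expected Improvement vanishes
at every design point: `κ_n(x_i) = 0`. -/
theorem upEI_eq_zero_at_design_points {X : Type*} [MetricSpace X] {n : ℕ} (hn : 2 ≤ n)
    (x : Fin n → X) (hx : ∃ k₁ k₂ : Fin n, x k₁ ≠ x k₂)
    (ρ δ : ℝ) (hρ : 0 < ρ) (hδ : 0 < δ)
    (s : X → ℝ) (subm : Fin n → X → ℝ)
    (hinterp : ∀ i j : Fin n, j ≠ i → subm j (x i) = s (x i)) :
    ∀ i : Fin n, upEI x s subm ρ δ (x i) = 0 := by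
  intro i
  have : Nonempty (Fin n) := ⟨i⟩
  have hinf : (⨅ j : Fin n, dist (x i) (x j)) = 0 := by
    apply le_antisymm
    · exact (ciInf_le (Set.finite_range _).bddBelow i).trans_eq (dist_self _)
    · exact le_ciInf fun j => dist_nonneg
  unfold upEI
  rw [hinf, mul_zero, add_zero]
  apply Finset.sum_eq_zero
  intro j _
  by_cases h : j = i
  · subst h
    unfold upWeight
    simp [dist_self]
  · have hle : (⨅ k : Fin n, s (x k)) - subm j (x i) ≤ 0 := by
      rw [sub_nonpos, hinterp i j h]
      exact ciInf_le (Set.finite_range _).bddBelow i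
    rw [max_eq_right hle, mul_zero]
end

section
/- Let Y be a real Gaussian random variable with mean m and variance σ² > 0, and let t ∈ ℝ. Then the expected improvement below the threshold t satisfies the closed-form expression E[max(t − Y, 0)] = (t − m) · Φ((t − m)/σ) + σ · φ((t − m)/σ), where Φ is the cumulative distribution function and φ the probability density function of the standard normal distribution. -/
open MeasureTheory

/-- The probability density function `φ` of the standard normal distribution. -/
noncomputable def stdNormalPDF (u : ℝ) : ℝ :=
  (1 / Real.sqrt (2 * Real.pi)) * Real.exp (-u ^ 2 / 2)

/-- The cumulative distribution function `Φ` of the standard normal distribution. -/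
noncomputable def stdNormalCDF (u : ℝ) : ℝ :=
  ∫ v in Set.Iic u, stdNormalPDF v

lemma stdNormalPDF_eq_gaussian : ProbabilityTheory.gaussianPDFReal 0 1 = stdNormalPDF := by
  ext u
  simp [ProbabilityTheory.gaussianPDFReal, stdNormalPDF, one_div, Real.exp_neg]

lemma integrable_stdNormalPDF : Integrable stdNormalPDF := by
  rw [← stdNormalPDF_eq_gaussian]
  exact ProbabilityTheory.integrable_gaussianPDFReal 0 1

lemma integrable_mul_stdNormalPDF : Integrable (fun u => u * stdNormalPDF u) := by
  have h : (fun u : ℝ => u * stdNormalPDF u)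
      = fun u => (1 / Real.sqrt (2 * Real.pi)) * (u * Real.exp (-(1/2 : ℝ) * u ^ 2)) := by
    ext u
    unfold stdNormalPDF
    ring_nf
  rw [h]
  exact (integrable_mul_exp_neg_mul_sq (by norm_num : (0:ℝ) < 1/2)).const_mul _

lemma hasDerivAt_neg_stdNormalPDF (u : ℝ) :
    HasDerivAt (fun v => -stdNormalPDF v) (u * stdNormalPDF u) u := by
  have h1 : HasDerivAt (fun v : ℝ => -v ^ 2 / 2) (-u) u := by
    have := ((hasDerivAt_pow 2 u).neg).div_const 2
    refine this.congr_deriv ?_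
    push_cast
    ring
  have h2 := ((h1.exp).const_mul (1 / Real.sqrt (2 * Real.pi))).neg
  simp only [stdNormalPDF]
  refine h2.congr_deriv ?_
  ring

lemma tendsto_stdNormalPDF_atBot :
    Filter.Tendsto stdNormalPDF Filter.atBot (nhds 0) := by
  unfold stdNormalPDF
  rw [show (0:ℝ) = (1 / Real.sqrt (2 * Real.pi)) * 0 by ring]
  refine Filter.Tendsto.const_mul _ ?_
  refine Real.tendsto_exp_atBot.comp ?_
  apply Filter.Tendsto.atBot_div_const (by norm_num : (0:ℝ) < 2)
  refine Filter.tendsto_neg_atTop_atBot.comp ?_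
  have h := (Filter.tendsto_pow_atTop (two_ne_zero)).comp
      (Filter.tendsto_abs_atBot_atTop (G := ℝ))
  refine h.congr fun x => ?_
  simp [sq_abs]

lemma integral_Iic_mul_stdNormalPDF (c : ℝ) :
    ∫ u in Set.Iic c, u * stdNormalPDF u = -stdNormalPDF c := by
  have := integral_Iic_of_hasDerivAt_of_tendsto'
    (f := fun v => -stdNormalPDF v) (f' := fun u => u * stdNormalPDF u) (a := c) (m := 0)
    (fun x _ => hasDerivAt_neg_stdNormalPDF x)
    (integrable_mul_stdNormalPDF.integrableOn)
    (by simpa using tendsto_stdNormalPDF_atBot.neg)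
  simpa using this

lemma key_integral (c : ℝ) :
    ∫ u, max (c - u) 0 * stdNormalPDF u = c * stdNormalCDF c + stdNormalPDF c := by
  have hind : (fun u => max (c - u) 0 * stdNormalPDF u)
      = Set.indicator (Set.Iic c) (fun u => (c - u) * stdNormalPDF u) := by
    ext u
    rw [Set.indicator_apply]
    split_ifs with h
    · rw [max_eq_left (by rw [Set.mem_Iic] at h; linarith)]
    · rw [Set.mem_Iic] at h
      rw [max_eq_right (by push_neg at h; linarith), zero_mul]
  rw [hind, integral_indicator measurableSet_Iic]
  have h1 : IntegrableOn (fun u => c * stdNormalPDF u) (Set.Iic c) :=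
    (integrable_stdNormalPDF.const_mul c).integrableOn
  have h2 : IntegrableOn (fun u => u * stdNormalPDF u) (Set.Iic c) :=
    integrable_mul_stdNormalPDF.integrableOn
  have hsplit : ∫ u in Set.Iic c, (c - u) * stdNormalPDF u
      = (∫ u in Set.Iic c, c * stdNormalPDF u) - ∫ u in Set.Iic c, u * stdNormalPDF u := by
    rw [← integral_sub h1 h2]
    congr 1; ext u; ring
  rw [hsplit, integral_Iic_mul_stdNormalPDF, integral_const_mul, stdNormalCDF]
  ring

/-- closed form of the Expected Improvement for a Gaussian random variable
`Y ~ N(m, σ²)` with `σ > 0` and threshold `t`: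
`E[max(t − Y, 0)] = (t − m)·Φ((t − m)/σ) + σ·φ((t − m)/σ)`. -/
theorem expectedImprovement_gaussian (m σ t : ℝ) (hσ : 0 < σ) :
    (∫ y, max (t - y) 0 ∂(ProbabilityTheory.gaussianReal m ⟨σ ^ 2, sq_nonneg σ⟩)) =
      (t - m) * stdNormalCDF ((t - m) / σ) + σ * stdNormalPDF ((t - m) / σ) := by
  have hmap : ProbabilityTheory.gaussianReal m ⟨σ ^ 2, sq_nonneg σ⟩
      = (ProbabilityTheory.gaussianReal 0 1).map (fun u => σ * u + m) := by
    have h1 := ProbabilityTheory.gaussianReal_map_const_mul (μ := 0) (v := 1) σ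
    have h2 := ProbabilityTheory.gaussianReal_map_add_const
      (μ := σ * 0) (v := ⟨σ ^ 2, sq_nonneg σ⟩) m
    simp only [mul_zero, zero_add, mul_one] at h1 h2
    rw [← h2]; erw [← h1]; rw [Measure.map_map (by fun_prop) (by fun_prop)]
    rfl
  rw [hmap, integral_map (f := fun y => max (t - y) 0) (by fun_prop)
    ((continuous_const.sub continuous_id').max continuous_const).aestronglyMeasurable]
  have hw : ProbabilityTheory.gaussianReal 0 1
      = volume.withDensity
        (fun x => ((ProbabilityTheory.gaussianPDFReal 0 1 x).toNNReal : ENNReal)) := by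
    rw [ProbabilityTheory.gaussianReal_of_var_ne_zero 0 one_ne_zero]
    rfl
  rw [hw, integral_withDensity_eq_integral_smul
    ((ProbabilityTheory.measurable_gaussianPDFReal 0 1).real_toNNReal)]
  have heq : ∀ u : ℝ, (ProbabilityTheory.gaussianPDFReal 0 1 u).toNNReal • max (t - (σ * u + m)) 0
      = σ * (max ((t - m)/σ - u) 0 * stdNormalPDF u) := by
    intro u
    rw [NNReal.smul_def, smul_eq_mul,
      Real.coe_toNNReal _ (ProbabilityTheory.gaussianPDFReal_nonneg 0 1 u),
      stdNormalPDF_eq_gaussian]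
    have hts : t - (σ * u + m) = σ * ((t - m)/σ - u) := by field_simp; ring
    rw [hts, show max (σ * ((t - m)/σ - u)) 0 = σ * max ((t - m)/σ - u) 0 by
      rw [mul_max_of_nonneg _ _ hσ.le, mul_zero]]
    ring
  simp_rw [heq]
  rw [integral_const_mul, key_integral]
  field_simp
end
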